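/- Let X be a locally compact metrisable space with pairwise commuting continuous maps φ₁,…,φ_d : X → X and let J ⊆ {1,…,d}. Let F be the ordinal-indexed family of subsets of X defined by transfinite recursion: F(0) = X, F(γ+1) = N_J(F(γ)) for every ordinal γ, and F(β) = ⋂_{γ<β} F(γ) for every limit ordinal β. Then there exists a least ordinal γ₀ with F(γ₀+1) = F(γ₀) (the strong J-centre and its depth), and F(γ₀) equals the closure of the set X_{Jr} of J-recurrent points; moreover F(γ) ⊇ closure(X_{Jr}) for every ordinal γ. -/

import Mathlib

/-
Every `J`-recurrent point survives each removal of `J`-wandering points, so all `F(γ)` contain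
the closure of the recurrent set. The family is decreasing and cannot be injective on the
ordinals, so it stabilises, and the first stable stage `Y` satisfies `Y ⊆ N_J(Y)`. In such a `Y`
every point of an open set `V` can be followed by a point of `V ∩ Y` returning to `V` with
arbitrarily large `J`-coordinates; iterating this inside nested relatively compact open sets of
shrinking radius produces, by Cantor's intersection theorem, a `J`-recurrent point in any
prescribed open set meeting `Y`.
-/

open Filter Topology Set

/-- `phiIter φ n = φ₁^[n₁] ∘ ⋯ ∘ φ_d^[n_d]`. -/
def phiIter {X : Type*} {d : ℕ} (φ : Fin d → X → X) (n : Fin d → ℕ) : X → X :=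
  (List.ofFn fun j : Fin d => (φ j)^[n j]).foldr (· ∘ ·) id

/-- A point is `J`-recurrent if `φ_{n_k}(x) → x` along a sequence strictly
increasing in the directions of `J`. -/
def JRecurrent {X : Type*} [TopologicalSpace X] {d : ℕ} (φ : Fin d → X → X)
    (J : Set (Fin d)) (x : X) : Prop :=
  ∃ n : ℕ → Fin d → ℕ, (∀ j ∈ J, StrictMono fun k => n k j) ∧
    Tendsto (fun k => phiIter φ (n k) x) atTop (𝓝 x)

/-- `NJ φ J Y` is the set of points of `Y` which are *not* `J`-wandering for the
subsystem on `Y`. -/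
def NJ {X : Type*} [TopologicalSpace X] {d : ℕ} (φ : Fin d → X → X)
    (J : Set (Fin d)) (Y : Set X) : Set X :=
  {y ∈ Y | ∀ V : Set X, IsOpen V → y ∈ V →
    ∃ n : Fin d → ℕ, (∀ j ∈ J, 0 < n j) ∧ ∃ z ∈ V ∩ Y, phiIter φ n z ∈ V ∩ Y}

section phiIter

variable {X : Type*} {d : ℕ}

theorem phiIter_succ (φ : Fin (d + 1) → X → X) (n : Fin (d + 1) → ℕ) :
    phiIter φ n = (φ 0)^[n 0] ∘ phiIter (fun j => φ j.succ) (fun j => n j.succ) := by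
  simp only [phiIter, List.ofFn_succ, List.foldr_cons]

theorem Function.Commute.phiIter_right {φ : Fin d → X → X} {g : X → X}
    (hg : ∀ j, Function.Commute g (φ j)) (n : Fin d → ℕ) :
    Function.Commute g (phiIter φ n) := by
  induction d with
  | zero => exact fun _ => rfl
  | succ d ih =>
    rw [phiIter_succ]
    exact ((hg 0).iterate_right (n 0)).comp_right (ih (fun j => hg j.succ) _)

theorem phiIter_add {φ : Fin d → X → X} (hcomm : ∀ i j, Function.Commute (φ i) (φ j))
    (n m : Fin d → ℕ) : phiIter φ (n + m) = phiIter φ n ∘ phiIter φ m := by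
  induction d with
  | zero => rfl
  | succ d ih =>
    have hswap : Function.Commute ((φ 0)^[m 0])
        (phiIter (fun j => φ j.succ) (fun j => n j.succ)) :=
      Function.Commute.phiIter_right (fun j => (hcomm 0 j.succ).iterate_left (m 0)) _
    rw [phiIter_succ, phiIter_succ, phiIter_succ, Pi.add_apply, Function.iterate_add,
      show (fun j : Fin d => (n + m) j.succ) = (fun j => n j.succ) + (fun j => m j.succ) from rfl,
      ih fun i j => hcomm i.succ j.succ]
    funext x
    exact congrArg (φ 0)^[n 0] (hswap _)

theorem phiIter_comp_comm {φ : Fin d → X → X} (hcomm : ∀ i j, Function.Commute (φ i) (φ j))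
    (n m : Fin d → ℕ) : phiIter φ n ∘ phiIter φ m = phiIter φ m ∘ phiIter φ n := by
  rw [← phiIter_add hcomm, add_comm, phiIter_add hcomm]

theorem continuous_phiIter [TopologicalSpace X] {φ : Fin d → X → X}
    (hcont : ∀ j, Continuous (φ j)) (n : Fin d → ℕ) : Continuous (phiIter φ n) := by
  induction d with
  | zero => exact continuous_id
  | succ d ih =>
    rw [phiIter_succ]
    exact ((hcont 0).iterate (n 0)).comp (ih (fun j => hcont j.succ) _)

end phiIter

section Recurrence

variable {X : Type*} [TopologicalSpace X] {d : ℕ} {φ : Fin d → X → X} {J : Set (Fin d)}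

theorem JRecurrent.phiIter_apply (hcont : ∀ j, Continuous (φ j))
    (hcomm : ∀ i j, Function.Commute (φ i) (φ j)) {x : X} (hx : JRecurrent φ J x)
    (m : Fin d → ℕ) : JRecurrent φ J (phiIter φ m x) := by
  obtain ⟨n, hn, hlim⟩ := hx
  exact ⟨n, hn, (((continuous_phiIter hcont m).tendsto x).comp hlim).congr fun k =>
    congr_fun (phiIter_comp_comm hcomm m (n k)) x⟩

theorem jRecurrent_of_tendsto {x : X} {n : ℕ → Fin d → ℕ}
    (hn : ∀ j ∈ J, Tendsto (fun k => n k j) atTop atTop)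
    (hlim : Tendsto (fun k => phiIter φ (n k) x) atTop (𝓝 x)) : JRecurrent φ J x := by
  have hnext : ∀ k, ∃ k', k < k' ∧ ∀ j ∈ J, n k j < n k' j := fun k =>
    ((eventually_gt_atTop k).and ((eventually_all_finite J.toFinite).2 fun j hj =>
      (hn j hj).eventually_gt_atTop (n k j))).exists
  choose g hg using hnext
  have hψ : ∀ i, g^[i] 0 < g^[i + 1] 0 ∧ ∀ j ∈ J, n (g^[i] 0) j < n (g^[i + 1] 0) j :=
    fun i => by simpa only [Function.iterate_succ_apply'] using hg (g^[i] 0)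
  exact ⟨fun i => n (g^[i] 0), fun j hj => strictMono_nat_of_lt_succ fun i => (hψ i).2 j hj,
    hlim.comp (strictMono_nat_of_lt_succ fun i => (hψ i).1).tendsto_atTop⟩

theorem closure_setOf_JRecurrent_subset_NJ (hcont : ∀ j, Continuous (φ j))
    (hcomm : ∀ i j, Function.Commute (φ i) (φ j)) {Y : Set X}
    (hY : closure {x | JRecurrent φ J x} ⊆ Y) :
    closure {x | JRecurrent φ J x} ⊆ NJ φ J Y := by
  intro y hy
  refine ⟨hY hy, fun V hV hyV => ?_⟩
  obtain ⟨x, hxV, hx⟩ := mem_closure_iff.1 hy V hV hyV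
  obtain ⟨n, hn, hlim⟩ := id hx
  obtain ⟨k, hk, hkV⟩ :=
    ((eventually_gt_atTop 0).and (hlim.eventually_mem (hV.mem_nhds hxV))).exists
  exact ⟨n k, fun j hj => (Nat.zero_le _).trans_lt (hn j hj hk), x,
    ⟨hxV, hY (subset_closure hx)⟩, hkV, hY (subset_closure (hx.phiIter_apply hcont hcomm (n k)))⟩

theorem exists_phiIter_mem_of_subset_NJ (hcont : ∀ j, Continuous (φ j))
    (hcomm : ∀ i j, Function.Commute (φ i) (φ j)) {Y : Set X} (hY : Y ⊆ NJ φ J Y)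
    {V : Set X} (hV : IsOpen V) {y : X} (hyV : y ∈ V) (hy : y ∈ Y) (K : ℕ) :
    ∃ n : Fin d → ℕ, (∀ j ∈ J, K ≤ n j) ∧ ∃ z ∈ V ∩ Y, phiIter φ n z ∈ V := by
  induction K with
  | zero =>
    obtain ⟨n, -, z, hz, hnz, -⟩ := (hY hy).2 V hV hyV
    exact ⟨n, fun _ _ => Nat.zero_le _, z, hz, hnz⟩
  | succ K ih =>
    obtain ⟨n, hn, z, ⟨hzV, hzY⟩, hnz⟩ := ih
    -- a return of `z` inside `V ∩ φ_n⁻¹ V` adds at least one to every `J`-coordinate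
    obtain ⟨m, hm, w, ⟨⟨hwV, -⟩, hwY⟩, ⟨-, hmw⟩, -⟩ := (hY hzY).2 _
      (hV.inter ((continuous_phiIter hcont n).isOpen_preimage V hV)) ⟨hzV, hnz⟩
    refine ⟨n + m, fun j hj => Nat.add_le_add (hn j hj) (hm j hj), w, ⟨hwV, hwY⟩, ?_⟩
    rwa [phiIter_add hcomm]

end Recurrence

section Metric

variable {X : Type*} [PseudoMetricSpace X] {d : ℕ} {φ : Fin d → X → X} {J : Set (Fin d)}

theorem tendsto_of_mem_ball {ι : Type*} {l : Filter ι} {a z : ι → X} {x : X} {ε : ι → ℝ}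
    (hε : Tendsto ε l (𝓝 0)) (ha : ∀ k, a k ∈ Metric.ball (z k) (ε k))
    (hx : ∀ k, x ∈ Metric.ball (z k) (ε k)) : Tendsto a l (𝓝 x) := by
  refine tendsto_iff_dist_tendsto_zero.2 <| squeeze_zero (fun _ => dist_nonneg)
    (fun k => (dist_triangle_right _ _ (z k)).trans (add_le_add (ha k).le (hx k).le)) ?_
  simpa using hε.add hε

variable [LocallyCompactSpace X] (hcont : ∀ j, Continuous (φ j))
  (hcomm : ∀ i j, Function.Commute (φ i) (φ j))
include hcont hcomm

theorem exists_shrinking_return {Y : Set X} (hY : Y ⊆ NJ φ J Y) {V : Set X} (hV : IsOpen V)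
    {c : X} (hcV : c ∈ V) (hc : c ∈ Y) (K : ℕ) {ε : ℝ} (hε : 0 < ε) :
    ∃ W : Set X, ∃ z ∈ W ∩ Y, ∃ n : Fin d → ℕ, IsOpen W ∧ W ⊆ Metric.ball z ε ∧
      IsCompact (closure W) ∧ closure W ⊆ V ∧ (∀ j ∈ J, K ≤ n j) ∧
      MapsTo (phiIter φ n) (closure W) V := by
  obtain ⟨n, hn, z, ⟨hzV, hz⟩, hnz⟩ := exists_phiIter_mem_of_subset_NJ hcont hcomm hY hV hcV hc K
  have hO : IsOpen (V ∩ phiIter φ n ⁻¹' V ∩ Metric.ball z ε) :=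
    (hV.inter ((continuous_phiIter hcont n).isOpen_preimage V hV)).inter Metric.isOpen_ball
  obtain ⟨W, hW, hzW, hWO, hWc⟩ := exists_open_between_and_isCompact_closure isCompact_singleton
    hO (singleton_subset_iff.2 ⟨⟨hzV, hnz⟩, Metric.mem_ball_self hε⟩)
  exact ⟨W, z, ⟨hzW rfl, hz⟩, n, hW, subset_closure.trans (hWO.trans inter_subset_right), hWc,
    hWO.trans (inter_subset_left.trans inter_subset_left), hn, fun x hx => (hWO hx).1.2⟩

theorem subset_closure_setOf_JRecurrent {Y : Set X} (hY : Y ⊆ NJ φ J Y) :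
    Y ⊆ closure {x | JRecurrent φ J x} := by
  intro y hy
  refine mem_closure_iff.2 fun U hU hyU => ?_
  let S := {p : Set X × X // IsOpen p.1 ∧ p.2 ∈ p.1 ∧ p.2 ∈ Y}
  have hstep : ∀ (k : ℕ) (p : S), ∃ q : S, ∃ n : Fin d → ℕ,
      q.1.1 ⊆ Metric.ball q.1.2 (1 / (k + 1)) ∧ IsCompact (closure q.1.1) ∧
      closure q.1.1 ⊆ p.1.1 ∧ (∀ j ∈ J, k ≤ n j) ∧ MapsTo (phiIter φ n) (closure q.1.1) p.1.1 := by
    rintro k ⟨⟨V, c⟩, hV, hcV, hc⟩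
    obtain ⟨W, z, ⟨hzW, hz⟩, n, hW, hWz, hWc, hWV, hn, hnW⟩ :=
      exists_shrinking_return hcont hcomm hY hV hcV hc k (ε := 1 / (k + 1)) (by positivity)
    exact ⟨⟨(W, z), hW, hzW, hz⟩, n, hWz, hWc, hWV, hn, hnW⟩
  choose next n hnext using hstep
  let u : ℕ → S := fun k => Nat.rec (motive := fun _ => S) ⟨(U, y), hU, hyU, hy⟩ next k
  let C : ℕ → Set X := fun k => closure (u (k + 1)).1.1
  have hC : ∀ k, C k ⊆ (u k).1.1 := fun k => (hnext k (u k)).2.2.1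
  obtain ⟨x, hx⟩ := IsCompact.nonempty_iInter_of_sequence_nonempty_isCompact_isClosed C
    (fun k => (hC (k + 1)).trans subset_closure) (fun k => ⟨_, subset_closure (u (k + 1)).2.2.1⟩)
    (hnext 0 (u 0)).2.1 fun _ => isClosed_closure
  rw [mem_iInter] at hx
  -- both `x` and its image under `φ_{n_{k+1}}` lie in the `k`-th small open set `(u (k + 1)).1.1`
  refine ⟨x, hC 0 (hx 0), jRecurrent_of_tendsto (n := fun k => n (k + 1) (u (k + 1)))
    (fun j hj => tendsto_atTop_mono (fun k => (hnext (k + 1) (u (k + 1))).2.2.2.1 j hj)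
      (tendsto_add_atTop_nat 1)) ?_⟩
  exact tendsto_of_mem_ball tendsto_one_div_add_atTop_nhds_zero_nat
    (fun k => (hnext k (u k)).1 ((hnext (k + 1) (u (k + 1))).2.2.2.2 (hx (k + 1))))
    (fun k => (hnext k (u k)).1 (hC (k + 1) (hx (k + 1))))

end Metric

section OrdinalFamily

universe u

variable {X : Type*} {F : Ordinal.{u} → Set X}

theorem antitone_of_succ_subset (hsucc : ∀ γ, F (γ + 1) ⊆ F γ)
    (hlim : ∀ β, Order.IsSuccLimit β → F β = ⋂ γ ∈ Iio β, F γ) : Antitone F := by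
  intro γ δ hγδ
  induction δ using Ordinal.limitRecOn with
  | zero => rw [nonpos_iff_eq_zero.1 hγδ]
  | add_one δ ih =>
    rcases hγδ.eq_or_lt with rfl | h
    · exact subset_rfl
    · exact (hsucc δ).trans (ih (Order.lt_add_one_iff.1 h))
  | limit β hβ _ =>
    rcases hγδ.eq_or_lt with rfl | h
    · exact subset_rfl
    · rw [hlim β hβ]
      exact biInter_subset_of_mem h

theorem subset_of_succ_of_limit {S : Set X} (h0 : S ⊆ F 0)
    (hsucc : ∀ γ, S ⊆ F γ → S ⊆ F (γ + 1))
    (hlim : ∀ β, Order.IsSuccLimit β → F β = ⋂ γ ∈ Iio β, F γ) (γ : Ordinal) : S ⊆ F γ := by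
  induction γ using Ordinal.limitRecOn with
  | zero => exact h0
  | add_one γ ih => exact hsucc γ ih
  | limit β hβ ih =>
    rw [hlim β hβ]
    exact subset_iInter₂ ih

theorem exists_succ_eq_of_antitone {α : Type*} [PartialOrder α] [Small.{u} α]
    {F : Ordinal.{u} → α} (hF : Antitone F) : ∃ γ, F (γ + 1) = F γ := by
  by_contra! hne
  have hF_ne : ∀ a b, a < b → F a ≠ F b := fun a b hlt hab =>
    hne a ((hF le_self_add).antisymm (hab.le.trans (hF (Order.add_one_le_of_lt hlt))))
  exact not_injective_of_ordinal F fun a b hab => by_contra fun h =>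
    (lt_or_gt_of_ne h).elim (hF_ne a b · hab) (hF_ne b a · hab.symm)

end OrdinalFamily

/-- Lemma 16 (`cent2`): if `F` is the transfinite family `F(0) = X`,
`F(γ+1) = N_J(F(γ))`, `F(β) = ⋂_{γ<β} F(γ)` for limit `β`, then there is a least
ordinal `γ₀` with `F(γ₀+1) = F(γ₀)` (the strong `J`-centre and its depth), the set
`F(γ₀)` is the closure of the `J`-recurrent points, and every `F(γ)` contains this
closure. -/
theorem strong_JCentre_eq_closure_JRecurrent {X : Type} [TopologicalSpace X]
    [LocallyCompactSpace X] [TopologicalSpace.MetrizableSpace X] {d : ℕ}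
    (φ : Fin d → X → X) (hcont : ∀ j, Continuous (φ j))
    (hcomm : ∀ i j, Function.Commute (φ i) (φ j)) (J : Set (Fin d))
    (F : Ordinal → Set X) (hF0 : F 0 = Set.univ)
    (hFsucc : ∀ γ : Ordinal, F (γ + 1) = NJ φ J (F γ))
    (hFlim : ∀ β : Ordinal, Order.IsSuccLimit β → F β = ⋂ γ ∈ Set.Iio β, F γ) :
    (∃ γ₀ : Ordinal, F (γ₀ + 1) = F γ₀ ∧
        (∀ γ : Ordinal, F (γ + 1) = F γ → γ₀ ≤ γ) ∧
        F γ₀ = closure {x : X | JRecurrent φ J x}) ∧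
    ∀ γ : Ordinal, closure {x : X | JRecurrent φ J x} ⊆ F γ := by
  let _ : MetricSpace X := TopologicalSpace.metrizableSpaceMetric X
  have hR : ∀ γ, closure {x | JRecurrent φ J x} ⊆ F γ :=
    subset_of_succ_of_limit (hF0 ▸ subset_univ _) (fun γ h => by
      rw [hFsucc]; exact closure_setOf_JRecurrent_subset_NJ hcont hcomm h) hFlim
  have hstable : {γ | F (γ + 1) = F γ}.Nonempty := exists_succ_eq_of_antitone
    (antitone_of_succ_subset (fun γ => (hFsucc γ).trans_subset (sep_subset _ _)) hFlim)
  obtain ⟨γ₀, hγ₀, hmin⟩ : ∃ γ₀, F (γ₀ + 1) = F γ₀ ∧ ∀ γ, F (γ + 1) = F γ → γ₀ ≤ γ :=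
    ⟨_, csInf_mem hstable, fun γ hγ => csInf_le' hγ⟩
  have hY : F γ₀ ⊆ NJ φ J (F γ₀) := ((hFsucc γ₀).symm.trans hγ₀).ge
  exact ⟨⟨γ₀, hγ₀, hmin, (subset_closure_setOf_JRecurrent hcont hcomm hY).antisymm (hR γ₀)⟩, hR⟩
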